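/- For every finite simple graph G, vertex s of G, and natural number k, the Grundy value of Undirected Geography with k total passes satisfies g_pass((G,s), k) = g(G,s) XOR (k mod 2), where XOR is bitwise exclusive-or of natural numbers. In particular, g_pass((G,s),k) = g(G,s) when k is even, and g_pass((G,s),k) = g(G,s) XOR 1 when k is odd. -/

import Mathlib

noncomputable def mex (s : Finset ℕ) : ℕ := sInf {n : ℕ | n ∉ s}

noncomputable def geo {V : Type} [DecidableEq V] (G : SimpleGraph V) [DecidableRel G.Adj]
    (A : Finset V) (s : V) : ℕ :=
  if h : s ∈ A then
    mex (((A.erase s).filter (fun v => G.Adj s v)).image (fun v => geo G (A.erase s) v))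
  else 0
termination_by A.card
decreasing_by
  simp_wf
  exact Finset.card_erase_lt_of_mem h

/-- The Grundy value of Undirected Geography with passes: the position is
`((A, s), j)` where `A` is the set of remaining vertices, the token is on `s`, and `j`
passes remain; the options are the usual geography moves (keeping `j`) together with a
pass to `((A, s), j − 1)` when `j ≥ 1`. -/
noncomputable def geoPass {V : Type} [DecidableEq V] (G : SimpleGraph V)
    [DecidableRel G.Adj] (A : Finset V) (s : V) (j : ℕ) : ℕ :=
  if h : s ∈ A then
    match j with
    | 0 =>
      mex (((A.erase s).filter (fun v => G.Adj s v)).image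
        (fun v => geoPass G (A.erase s) v 0))
    | j' + 1 =>
      mex ((((A.erase s).filter (fun v => G.Adj s v)).image
        (fun v => geoPass G (A.erase s) v (j' + 1))) ∪ {geoPass G A s j'})
  else 0
termination_by (A.card, j)
decreasing_by
  · exact Prod.Lex.left _ _ (Finset.card_erase_lt_of_mem h)
  · exact Prod.Lex.left _ _ (Finset.card_erase_lt_of_mem h)
  · exact Prod.Lex.right _ (Nat.lt_succ_self j')

/-! With `j` passes left the game is the sum of geography with a heap from which one token is taken
at a time, so its value is `g ^^^ (j % 2)`. Directly, by induction: let `S` be the values of the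
geography moves. With `j + 1` passes left and `j` even, the moves have values `S ^^^ 1` and the pass
has value `mex S`, so the mex is `mex S ^^^ 1`; with `j` odd, the moves have values `S` and the pass
adds `mex S ^^^ 1 ≠ mex S`, which leaves the mex unchanged. -/

theorem mex_notMem (S : Finset ℕ) : mex S ∉ S :=
  Nat.sInf_mem (s := {n | n ∉ S}) (Infinite.exists_notMem_finset S)

theorem mem_of_lt_mex {S : Finset ℕ} {n : ℕ} (h : n < mex S) : n ∈ S := by
  by_contra hn
  exact (Nat.sInf_le hn).not_gt h

theorem mex_eq_of_forall_lt_mem {S : Finset ℕ} {a : ℕ} (ha : a ∉ S)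
    (hlt : ∀ n < a, n ∈ S) :
    mex S = a :=
  le_antisymm (Nat.sInf_le ha) (not_lt.1 fun h => mex_notMem S (hlt _ h))

theorem mex_union_singleton_of_ne {S : Finset ℕ} {a : ℕ} (ha : a ≠ mex S) :
    mex (S ∪ {a}) = mex S := by
  refine mex_eq_of_forall_lt_mem ?_ fun n hn => Finset.mem_union_left _ (mem_of_lt_mex hn)
  simpa [Ne.symm ha] using mex_notMem S

theorem mex_image_xor_one_union_singleton (S : Finset ℕ) :
    mex (S.image (· ^^^ 1) ∪ {mex S}) = mex S ^^^ 1 := by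
  refine mex_eq_of_forall_lt_mem ?_ fun n hn => ?_
  · simp [mex_notMem]
  · rcases Nat.lt_xor_cases hn with h | h
    · exact Finset.mem_union_left _
        (Finset.mem_image.2 ⟨_, mem_of_lt_mex h, Nat.xor_xor_cancel_right n 1⟩)
    · exact Finset.mem_union_right _
        (Finset.mem_singleton.2 (Nat.eq_of_xor_eq_zero (Nat.lt_one_iff.1 h)))

section Geography

variable {V : Type} [DecidableEq V] (G : SimpleGraph V) [DecidableRel G.Adj] {A : Finset V} {s : V}

theorem geo_of_mem (hs : s ∈ A) :
    geo G A s = mex (((A.erase s).filter (fun v => G.Adj s v)).image (geo G (A.erase s))) := by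
  rw [geo, dif_pos hs]

theorem geoPass_zero_of_mem (hs : s ∈ A) :
    geoPass G A s 0 =
      mex (((A.erase s).filter (fun v => G.Adj s v)).image (geoPass G (A.erase s) · 0)) := by
  rw [geoPass, dif_pos hs]

theorem geoPass_succ_of_mem (hs : s ∈ A) (j : ℕ) :
    geoPass G A s (j + 1) =
      mex ((((A.erase s).filter (fun v => G.Adj s v)).image (geoPass G (A.erase s) · (j + 1)))
        ∪ {geoPass G A s j}) := by
  rw [geoPass, dif_pos hs]

theorem geoPass_eq_geo_xor (A : Finset V) :
    ∀ s ∈ A, ∀ j, geoPass G A s j = geo G A s ^^^ (j % 2) := by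
  induction A using Finset.strongInduction with
  | H A ih =>
    intro s hs j
    have hmoves : ∀ j,
        ((A.erase s).filter (fun v => G.Adj s v)).image (geoPass G (A.erase s) · j) =
          ((A.erase s).filter (fun v => G.Adj s v)).image (geo G (A.erase s) · ^^^ (j % 2)) :=
      fun j => Finset.image_congr fun v hv =>
        ih _ (Finset.erase_ssubset hs) v (Finset.mem_of_mem_filter v hv) j
    induction j with
    | zero => simp [geoPass_zero_of_mem G hs, geo_of_mem G hs, hmoves 0]
    | succ j ihj =>
      rw [geoPass_succ_of_mem G hs, ihj, hmoves, geo_of_mem G hs]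
      rcases Nat.mod_two_eq_zero_or_one j with h | h
      · rw [h, show (j + 1) % 2 = 1 by omega, Nat.xor_zero]
        have := mex_image_xor_one_union_singleton
          (((A.erase s).filter (fun v => G.Adj s v)).image (geo G (A.erase s)))
        rwa [Finset.image_image] at this
      · simp only [h, show (j + 1) % 2 = 0 by omega, Nat.xor_zero]
        exact mex_union_singleton_of_ne (by simp)

end Geography

/-- `g_pass((G,s), k) = g(G,s) XOR (k mod 2)`; in particular the value is
`g(G,s)` when `k` is even and `g(G,s) XOR 1` when `k` is odd. -/
theorem stmt10 {V : Type} [Fintype V] [DecidableEq V]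
    (G : SimpleGraph V) [DecidableRel G.Adj] (s : V) (k : ℕ) :
    geoPass G Finset.univ s k = (geo G Finset.univ s) ^^^ (k % 2) ∧
    (k % 2 = 0 → geoPass G Finset.univ s k = geo G Finset.univ s) ∧
    (k % 2 = 1 → geoPass G Finset.univ s k = (geo G Finset.univ s) ^^^ 1) := by
  have h := geoPass_eq_geo_xor G Finset.univ s (Finset.mem_univ s) k
  exact ⟨h, fun hk => by rw [h, hk, Nat.xor_zero], fun hk => by rw [h, hk]⟩
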